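/- Let a ≥ 2 and n ≥ 1 be natural numbers, let m ≥ 2, and let c_1 < c_2 < ... < c_m be positive integers such that the numbers p_i = a^{c_i} n + 1 are (distinct) primes for i = 1, ..., m. Then for N = p_1 p_2 ⋯ p_m, the number φ(N) does not divide (N − 1)^m. -/

import Mathlib

/-!
Write `d = a ^ c₁ * n`, so that `pᵢ = a ^ eᵢ * d + 1` with `eᵢ = cᵢ - c₁`, `e₁ = 0` and `eᵢ ≥ 1`
for `i ≥ 2`. Then `φ(N) = a ^ (∑ eᵢ) * d ^ m` with `∑ eᵢ ≥ 1`. On the other side every `pᵢ` with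
`i ≥ 2` is `1` modulo `d * a`, so `N - 1 = d * (a * k + 1)` for some `k`. Cancelling `d ^ m`, the
divisibility would make the power `a ^ (∑ eᵢ) > 1` divide `(a * k + 1) ^ m`, which is coprime to `a`.
-/

open Finset
open scoped Nat Function

theorem Nat.totient_prod_of_pairwise_coprime {ι : Type*} (s : Finset ι) (f : ι → ℕ)
    (hs : (s : Set ι).Pairwise (Nat.Coprime on f)) :
    φ (∏ i ∈ s, f i) = ∏ i ∈ s, φ (f i) := by
  classical
  induction s using Finset.induction_on with
  | empty => simp
  | insert j s hj ih =>
    rw [coe_insert, Set.pairwise_insert_of_symm] at hs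
    rw [prod_insert hj, prod_insert hj, Nat.totient_mul, ih hs.1]
    exact Nat.Coprime.prod_right fun i hi => hs.2 i hi (ne_of_mem_of_not_mem hi hj).symm

theorem Nat.exists_prod_pow_mul_add_one_sub_one_eq {ι : Type*} [Fintype ι] [DecidableEq ι]
    (a d : ℕ) {e : ι → ℕ} {i₀ : ι} (he₀ : e i₀ = 0) (he : ∀ i ≠ i₀, e i ≠ 0) :
    ∃ k, ∏ i, (a ^ e i * d + 1) - 1 = d * (a * k + 1) := by
  set P := ∏ i ∈ univ.erase i₀, (a ^ e i * d + 1)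
  have hP : P ≡ 1 [MOD d * a] := Nat.ModEq.prod_one fun i hi => by
    have hdvd : d * a ∣ a ^ e i * d :=
      mul_comm a d ▸ mul_dvd_mul_right (dvd_pow_self a (he i (ne_of_mem_erase hi))) d
    simpa using (Nat.modEq_zero_iff_dvd.mpr hdvd).add_right 1
  have hP_pos : 1 ≤ P := Finset.prod_pos fun _ _ => Nat.succ_pos _
  obtain ⟨k, hk⟩ := (Nat.modEq_iff_dvd' hP_pos).mp hP.symm
  refine ⟨k * (d + 1), ?_⟩
  rw [← mul_prod_erase univ _ (mem_univ i₀), he₀, pow_zero, one_mul]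
  change (d + 1) * P - 1 = _
  rw [show P = d * a * k + 1 by omega,
    show (d + 1) * (d * a * k + 1) = d * (a * (k * (d + 1)) + 1) + 1 by ring, Nat.add_sub_cancel]

theorem Nat.pow_mul_pow_not_dvd_mul_pow {a d e k m : ℕ} (ha : 1 < a) (hd : d ≠ 0) (he : e ≠ 0) :
    ¬ a ^ e * d ^ m ∣ (d * (a * k + 1)) ^ m := by
  intro h
  rw [mul_pow, mul_comm (a ^ e)] at h
  have hcop : Nat.Coprime (a ^ e) ((a * k + 1) ^ m) :=
    ((Nat.coprime_mul_left_add_right a 1 k).mpr (Nat.coprime_one_right a)).pow e m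
  have := Nat.pow_eq_one.mp (hcop.eq_one_of_dvd (Nat.dvd_of_mul_dvd_mul_left (by positivity) h))
  omega

theorem Nat.totient_prod_not_dvd_sub_one_pow {ι : Type*} [Fintype ι] [Nontrivial ι] {a d : ℕ}
    (ha : 1 < a) (hd : d ≠ 0) {e : ι → ℕ} (he : Function.Injective e) {i₀ : ι} (he₀ : e i₀ = 0)
    (hprime : ∀ i, (a ^ e i * d + 1).Prime) :
    ¬ φ (∏ i, (a ^ e i * d + 1)) ∣ (∏ i, (a ^ e i * d + 1) - 1) ^ Fintype.card ι := by
  classical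
  have hinj : Function.Injective fun i => a ^ e i * d + 1 := fun i j h =>
    he (Nat.pow_right_injective ha (Nat.eq_of_mul_eq_mul_right (Nat.pos_of_ne_zero hd)
      (Nat.add_right_cancel h)))
  have hcop : ((univ : Finset ι) : Set ι).Pairwise (Nat.Coprime on fun i => a ^ e i * d + 1) :=
    fun i _ j _ hij => (Nat.coprime_primes (hprime i) (hprime j)).mpr (hinj.ne hij)
  have htot : φ (∏ i, (a ^ e i * d + 1)) = (a ^ ∑ i, e i) * d ^ Fintype.card ι := by
    simp only [Nat.totient_prod_of_pairwise_coprime _ _ hcop, Nat.totient_prime (hprime _), Nat.add_sub_cancel,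
      prod_mul_distrib, prod_pow_eq_pow_sum, prod_const, Finset.card_univ]
  obtain ⟨j, hj⟩ := exists_ne i₀
  have hsum : ∑ i, e i ≠ 0 := fun h =>
    he₀ ▸ he.ne hj <| Finset.sum_eq_zero_iff.mp h j (mem_univ j)
  obtain ⟨k, hk⟩ := Nat.exists_prod_pow_mul_add_one_sub_one_eq a d he₀ fun i hi => he₀ ▸ he.ne hi
  rw [htot, hk]
  exact Nat.pow_mul_pow_not_dvd_mul_pow ha hd hsum

theorem totient_not_dvd_pow_of_tuple_general (a n m : ℕ) (ha : 2 ≤ a) (hn : 1 ≤ n) (hm : 2 ≤ m)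
    (c : Fin m → ℕ) (hmono : StrictMono c)
    (hprime : ∀ i, Nat.Prime (a ^ c i * n + 1)) :
    ¬ Nat.totient (∏ i, (a ^ c i * n + 1)) ∣ ((∏ i, (a ^ c i * n + 1)) - 1) ^ m := by
  have : Nontrivial (Fin m) := Fin.nontrivial_iff_two_le.mpr hm
  let i₀ : Fin m := ⟨0, by omega⟩
  have hle : ∀ i, c i₀ ≤ c i := fun i => hmono.monotone (Nat.zero_le i.val)
  set d := a ^ c i₀ * n with hd
  have hshift : ∀ i, a ^ c i * n = a ^ (c i - c i₀) * d := fun i => by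
    rw [hd, ← mul_assoc, ← pow_add, Nat.sub_add_cancel (hle i)]
  simp only [hshift] at hprime ⊢
  have hinj : Function.Injective fun i => c i - c i₀ := fun i j h =>
    hmono.injective (by have := hle i; have := hle j; simp only at h; omega)
  simpa using Nat.totient_prod_not_dvd_sub_one_pow (by omega)
    (mul_ne_zero (pow_ne_zero _ (by omega)) (by omega)) hinj (Nat.sub_self _) hprime

/-- If `p i = a ^ (c i) * n + 1` are primes with `c` strictly increasing and positive
(`a ≥ 2`, `n ≥ 1`, `m ≥ 2`), then for `N = ∏ p i` we have `φ N ∤ (N - 1) ^ m`. -/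
theorem totient_not_dvd_pow_of_tuple (a n m : ℕ) (ha : 2 ≤ a) (hn : 1 ≤ n) (hm : 2 ≤ m)
    (c : Fin m → ℕ) (hc : ∀ i, 1 ≤ c i) (hmono : StrictMono c)
    (hprime : ∀ i, Nat.Prime (a ^ c i * n + 1)) :
    ¬ Nat.totient (∏ i, (a ^ c i * n + 1)) ∣ ((∏ i, (a ^ c i * n + 1)) - 1) ^ m :=
  totient_not_dvd_pow_of_tuple_general a n m ha hn hm c hmono hprime
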